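/- arXiv:1011.4090 — 4 statements merged into one kernel-verified Lean document; each statement's English description precedes it below -/
import Mathlib

section
/- Let P(t₁,…,t_n) be a symmetric polynomial over a field of characteristic 0, and let x₀ be a fixed point. Suppose P vanishes whenever N+1−k of its arguments are set equal to x₀, where 0 ≤ k ≤ N and 0 ≤ l < k with N−l ≤ n. Then the polynomial obtained by setting N−l of the arguments equal to a variable x, namely (x, t₁,…,t_{n−N+l}) ↦ P(x,…,x,t₁,…,t_{n−N+l}), is divisible by (x − x₀)^{k−l} as a polynomial in x. -/
/-!
Replace the `N - l` fused arguments by independent `x₀ + y₁, …, x₀ + y_{N-l}`: this gives a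
polynomial `R(y)` whose diagonal `R(x, …, x)` is the Taylor expansion at `x₀` of the fused
polynomial. If fewer than `k - l` of the `y`'s are nonzero, at least `N + 1 - k` arguments of `P`
equal `x₀`, so `R(y) = 0` by symmetry. Over an infinite field this forces every monomial of `R`
to involve at least `k - l` variables, hence to have degree at least `k - l`, and the same then
holds for every term of the diagonal.
-/

open Finset

theorem Finset.exists_perm_mapsTo {α : Type*} [Finite α] [DecidableEq α] {s t : Finset α}
    (h : #s ≤ #t) : ∃ e : Equiv.Perm α, ∀ a ∈ s, e a ∈ t := by
  obtain ⟨t', ht't, hcard⟩ := exists_subset_card_eq h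
  exact ⟨(equivOfCardEq hcard.symm).extendSubtype,
    fun a ha => ht't (Equiv.extendSubtype_mem _ a ha)⟩

theorem Finsupp.card_support_le_degree {σ : Type*} (d : σ →₀ ℕ) : #d.support ≤ d.degree := by
  rw [degree_apply, card_eq_sum_ones]
  gcongr with i hi
  exact Nat.one_le_iff_ne_zero.mpr (mem_support_iff.mp hi)

namespace MvPolynomial

variable {R σ τ : Type*}

section CommSemiring

variable [CommSemiring R]

theorem eval_aeval (z : τ → R) (Φ : σ → MvPolynomial τ R) (p : MvPolynomial σ R) :
    eval z (aeval Φ p) = eval (fun i => eval z (Φ i)) p := by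
  simpa [coe_aeval_eq_eval] using aeval_bind₁ z Φ p

open scoped Classical in
theorem eval_killCompl {f : σ → τ} (hf : f.Injective) (z : σ → R) (p : MvPolynomial τ R) :
    eval z (killCompl hf p) =
      eval (fun i => if h : i ∈ Set.range f then z ((Equiv.ofInjective f hf).symm ⟨i, h⟩)
        else 0) p := by
  rw [killCompl, eval_aeval]
  congr 2
  funext i
  split_ifs <;> simp

theorem aeval_X_monomial (d : σ →₀ ℕ) (c : R) :
    aeval (fun _ => Polynomial.X) (monomial d c) = Polynomial.C c * Polynomial.X ^ d.degree := by
  rw [aeval_monomial, Finsupp.prod, prod_pow_eq_pow_sum, Finsupp.degree_apply]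
  rfl

theorem IsSymmetric.eval_eq_zero_of_card_le [Finite σ] [DecidableEq σ]
    {p : MvPolynomial σ R} (hp : p.IsSymmetric) {s : Finset σ} {a : R}
    (h : ∀ v : σ → R, (∀ i ∈ s, v i = a) → eval v p = 0)
    {v : σ → R} {T : Finset σ} (hT : #s ≤ #T) (hv : ∀ i ∈ T, v i = a) : eval v p = 0 := by
  obtain ⟨e, he⟩ := exists_perm_mapsTo hT
  rw [← hp e, eval_rename]
  exact h _ fun i hi => hv _ (he i hi)

end CommSemiring

section InfiniteDomain

variable [CommRing R] [IsDomain R] [Infinite R]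

theorem coeff_eq_zero_of_eval_eq_zero {p : MvPolynomial σ R} {d : σ →₀ ℕ}
    (h : ∀ z : σ → R, (∀ i ∉ d.support, z i = 0) → eval z p = 0) : coeff d p = 0 := by
  have hval : (Subtype.val : d.support → σ).Injective := Subtype.val_injective
  have hd : (d.comapDomain Subtype.val hval.injOn).mapDomain Subtype.val = d :=
    d.mapDomain_comapDomain _ hval (by intro i; simp)
  have hkill : killCompl hval p = 0 := by
    refine funext fun z => ?_
    rw [eval_killCompl, map_zero]
    exact h _ fun i hi => dif_neg (by simpa using hi)
  rw [← hd, ← coeff_killCompl hval, hkill, coeff_zero]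

theorem X_pow_dvd_aeval_X_of_eval_eq_zero {p : MvPolynomial σ R} {r : ℕ}
    (h : ∀ S : Finset σ, #S < r → ∀ z : σ → R, (∀ i ∉ S, z i = 0) → eval z p = 0) :
    (Polynomial.X : Polynomial R) ^ r ∣ aeval (fun _ => Polynomial.X) p := by
  rw [p.as_sum, map_sum]
  refine dvd_sum fun d hd => ?_
  have hr : r ≤ d.degree := by
    by_contra! hlt
    exact mem_support_iff.mp hd <| coeff_eq_zero_of_eval_eq_zero <|
      h _ (d.card_support_le_degree.trans_lt hlt)
  rw [aeval_X_monomial]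
  exact dvd_mul_of_dvd_right (pow_dvd_pow _ hr) _

theorem X_sub_C_pow_dvd_aeval_ite_of_eval_eq_zero [DecidableEq σ] {p : MvPolynomial σ R}
    {a : R} {m : ℕ}
    (hp : ∀ v : σ → R, ∀ T : Finset σ, m ≤ #T → (∀ i ∈ T, v i = a) → eval v p = 0)
    (A : Finset σ) (c : σ → R) :
    (Polynomial.X - Polynomial.C a) ^ (#A + 1 - m) ∣
      aeval (fun i => if i ∈ A then Polynomial.X else Polynomial.C (c i)) p := by
  let shift : σ → MvPolynomial σ R := fun i => if i ∈ A then X i + C a else C (c i)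
  have htaylor : (aeval (fun i => if i ∈ A then Polynomial.X else Polynomial.C (c i)) p).comp
      (Polynomial.X + Polynomial.C a) = aeval (fun _ => Polynomial.X) (aeval shift p) := by
    rw [Polynomial.comp_eq_aeval, comp_aeval_apply, comp_aeval_apply]
    congr 2
    funext i
    by_cases hi : i ∈ A <;> simp [shift, hi]
  rw [Polynomial.X_sub_C_pow_dvd_iff, htaylor]
  refine X_pow_dvd_aeval_X_of_eval_eq_zero fun S hS z hz => ?_
  rw [eval_aeval]
  refine hp _ (A \ S) (by have := le_card_sdiff S A; omega) fun i hi => ?_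
  rw [mem_sdiff] at hi
  simp [shift, hi.1, hz i hi.2]

end InfiniteDomain

end MvPolynomial

/-- If a symmetric polynomial `P` in `n` variables vanishes whenever `N+1−k` of its
arguments are set equal to the fixed point `x₀`, then setting `N−l` of the arguments
(with `0 ≤ l < k`) equal to a variable `x` yields a polynomial in `x` divisible by
`(x − x₀)^{k−l}`. -/
theorem cluster_order_of_vanishing {F : Type*} [Field F] [CharZero F]
    (n N k l : ℕ) (hk : k ≤ N) (hln : N - l ≤ n)
    (x₀ : F) (P : MvPolynomial (Fin n) F)
    (hsym : ∀ σ : Equiv.Perm (Fin n), MvPolynomial.rename σ P = P)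
    (hvan : ∀ v : Fin n → F, (∀ i : Fin n, (i : ℕ) < N + 1 - k → v i = x₀) →
        MvPolynomial.eval v P = 0)
    (t : Fin (n - (N - l)) → F) :
    (Polynomial.X - Polynomial.C x₀) ^ (k - l) ∣
      MvPolynomial.aeval (fun i : Fin n =>
        if h : (i : ℕ) < N - l then (Polynomial.X : Polynomial F)
        else Polynomial.C (t ⟨(i : ℕ) - (N - l), by have := i.isLt; omega⟩)) P := by
  set A : Finset (Fin n) := {i | (i : ℕ) < N - l}
  have hA : #A = N - l := by simp [A, Fin.card_filter_val_lt, hln]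
  have hvan_of_card : ∀ v : Fin n → F, ∀ T : Finset (Fin n), N + 1 - k ≤ #T →
      (∀ i ∈ T, v i = x₀) → MvPolynomial.eval v P = 0 := fun v T hT hv =>
    MvPolynomial.IsSymmetric.eval_eq_zero_of_card_le hsym (s := {i | (i : ℕ) < N + 1 - k})
      (fun v hv => hvan v fun i hi => hv i (by simpa using hi))
      (by simpa [Fin.card_filter_val_lt] using le_trans (min_le_right _ _) hT) hv
  refine (pow_dvd_pow _ (show k - l ≤ #A + 1 - (N + 1 - k) by omega)).trans ?_
  convert MvPolynomial.X_sub_C_pow_dvd_aeval_ite_of_eval_eq_zero hvan_of_card A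
    (fun i => if h : (i : ℕ) < N - l then x₀ else t ⟨(i : ℕ) - (N - l), by omega⟩) using 2
  congr! 1
  funext i
  by_cases h : (i : ℕ) < N - l <;> simp [A, h]
end

section
/- Let f : [0,∞) → ℝ be continuous at 0 and bounded on [0,Λ] for some Λ > 0. Then lim_{a → (−1)⁺} (1+a) · ∫₀^Λ x^a f(x) dx = f(0). -/
open Filter

/-!
The weights `(1 + a) * x ^ a` on `(0, Λ]` form a family of peak functions at `0` as `a → -1⁺`:
they are nonnegative, their total mass `Λ ^ (a + 1)` tends to `1`, and on `[δ, ∞)` they are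
bounded by `(1 + a) * δ ^ a → 0`. Integrating `f` against them therefore recovers `f 0`.
-/

open Set MeasureTheory Topology

lemma one_add_mul_integral_rpow {a : ℝ} (ha : -1 < a) (b : ℝ) :
    (1 + a) * ∫ x in (0 : ℝ)..b, x ^ a = b ^ (a + 1) := by
  have : a + 1 ≠ 0 := by linarith
  rw [integral_rpow (Or.inl ha), Real.zero_rpow this, sub_zero, add_comm]
  field_simp

lemma tendsto_rpow_add_one_nhdsGT {b : ℝ} (hb : 0 < b) :
    Tendsto (fun a : ℝ => b ^ (a + 1)) (𝓝[>] (-1)) (𝓝 1) := by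
  have h : ContinuousAt (fun a : ℝ => b ^ (a + 1)) (-1) :=
    (Real.continuousAt_const_rpow hb.ne').comp (continuousAt_id.add continuousAt_const)
  simpa using h.tendsto.mono_left nhdsWithin_le_nhds

lemma tendsto_setIntegral_one_add_mul_rpow {Λ : ℝ} (hΛ : 0 < Λ) :
    Tendsto (fun a : ℝ => ∫ x in Ioc 0 Λ, (1 + a) * x ^ a) (𝓝[>] (-1)) (𝓝 1) := by
  refine (tendsto_rpow_add_one_nhdsGT hΛ).congr' ?_
  filter_upwards [self_mem_nhdsWithin] with a ha
  rw [integral_const_mul, ← intervalIntegral.integral_of_le hΛ.le, one_add_mul_integral_rpow ha]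

lemma tendstoUniformlyOn_one_add_mul_rpow {δ : ℝ} (hδ : 0 < δ) :
    TendstoUniformlyOn (fun a x : ℝ => (1 + a) * x ^ a) 0 (𝓝[>] (-1)) (Ici δ) := by
  have hbound : Tendsto (fun a : ℝ => (1 + a) * δ ^ a) (𝓝[>] (-1)) (𝓝 0) := by
    have h : ContinuousAt (fun a : ℝ => (1 + a) * δ ^ a) (-1) :=
      (continuousAt_const.add continuousAt_id).mul (Real.continuousAt_const_rpow hδ.ne')
    simpa using h.tendsto.mono_left nhdsWithin_le_nhds
  rw [Metric.tendstoUniformlyOn_iff]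
  intro ε hε
  filter_upwards [hbound.eventually (gt_mem_nhds hε),
    Ioo_mem_nhdsGT (show (-1 : ℝ) < 0 by norm_num)] with a hε' ha x hx
  have hx0 : 0 < x := hδ.trans_le hx
  rw [Pi.zero_apply, dist_zero_left, Real.norm_eq_abs,
    abs_of_nonneg (mul_nonneg (by linarith [ha.1]) (Real.rpow_nonneg hx0.le a))]
  calc (1 + a) * x ^ a ≤ (1 + a) * δ ^ a :=
        mul_le_mul_of_nonneg_left (Real.rpow_le_rpow_of_nonpos hδ hx ha.2.le) (by linarith [ha.1])
    _ < ε := hε'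

theorem tendsto_one_add_smul_integral_rpow_smul {E : Type*} [NormedAddCommGroup E]
    [NormedSpace ℝ E] [CompleteSpace E] {g : ℝ → E} {Λ : ℝ} {c : E} (hΛ : 0 < Λ)
    (hg : IntegrableOn g (Ioc 0 Λ)) (hgc : Tendsto g (𝓝[Ioc 0 Λ] 0) (𝓝 c)) :
    Tendsto (fun a : ℝ => (1 + a) • ∫ x in (0 : ℝ)..Λ, x ^ a • g x)
      (𝓝[>] (-1)) (𝓝 c) := by
  have hnonneg : ∀ᶠ a in 𝓝[>] (-1), ∀ x ∈ Ioc (0 : ℝ) Λ, 0 ≤ (1 + a) * x ^ a := by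
    filter_upwards [self_mem_nhdsWithin] with a ha x hx
    exact mul_nonneg (by linarith [mem_Ioi.1 ha]) (Real.rpow_nonneg hx.1.le a)
  have hunif : ∀ u : Set ℝ, IsOpen u → 0 ∈ u →
      TendstoUniformlyOn (fun a x : ℝ => (1 + a) * x ^ a) 0 (𝓝[>] (-1)) (Ioc 0 Λ \ u) := by
    intro u hu h0u
    obtain ⟨δ, hδ, hball⟩ := Metric.isOpen_iff.1 hu 0 h0u
    refine (tendstoUniformlyOn_one_add_mul_rpow hδ).mono fun x ⟨hxs, hxu⟩ => ?_
    by_contra hxδ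
    refine hxu (hball ?_)
    rw [Metric.mem_ball, Real.dist_0_eq_abs, abs_of_pos hxs.1]
    exact not_le.1 hxδ
  have hmeas : ∀ᶠ a in 𝓝[>] (-1),
      AEStronglyMeasurable (fun x : ℝ => (1 + a) * x ^ a) (volume.restrict (Ioc 0 Λ)) :=
    Eventually.of_forall fun a => ((measurable_id.pow_const a).const_mul _).aestronglyMeasurable
  refine (tendsto_setIntegral_peak_smul_of_integrableOn_of_tendsto measurableSet_Ioc
    measurableSet_Ioc subset_rfl self_mem_nhdsWithin measure_Ioc_lt_top.ne hnonneg hunif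
    (tendsto_setIntegral_one_add_mul_rpow hΛ) hmeas hg hgc).congr fun a => ?_
  rw [intervalIntegral.integral_of_le hΛ.le, ← integral_smul]
  simp only [smul_smul]

/-- If `f` is continuous at `0` (from the right) and bounded on `[0,Λ]`, then
`lim_{a → (−1)⁺} (1+a) · ∫₀^Λ x^a f(x) dx = f(0)`. -/
theorem limit_one_add_a_mul_integral (f : ℝ → ℝ) (Λ : ℝ) (hΛ : 0 < Λ)
    (hmeas : Measurable f)
    (hcont : ContinuousWithinAt f (Set.Ici 0) 0)
    (hbdd : ∃ M : ℝ, ∀ x ∈ Set.Icc (0 : ℝ) Λ, |f x| ≤ M) :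
    Tendsto (fun a : ℝ => (1 + a) * ∫ x in (0 : ℝ)..Λ, x ^ a * f x)
      (nhdsWithin (-1) (Set.Ioi (-1))) (nhds (f 0)) := by
  obtain ⟨M, hM⟩ := hbdd
  have hint : IntegrableOn f (Ioc 0 Λ) :=
    Measure.integrableOn_of_bounded measure_Ioc_lt_top.ne hmeas.aestronglyMeasurable
      (ae_restrict_of_forall_mem measurableSet_Ioc fun x hx => hM x (Ioc_subset_Icc_self hx))
  have hlim : Tendsto f (𝓝[Ioc 0 Λ] 0) (𝓝 (f 0)) :=
    hcont.tendsto.mono_left (nhdsWithin_mono _ (Ioc_subset_Icc_self.trans Icc_subset_Ici_self))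
  simpa only [smul_eq_mul] using tendsto_one_add_smul_integral_rpow_smul hΛ hint hlim
end

section
/- Fix integers N ≥ 1, m ≥ 1, 0 ≤ k₁,k₂,k₃ ≤ k ≤ N with k₁+k₂+k₃ = 2k; set n = mN−k. Let P = 𝐏_m^{(N|k₁,k₂,k₃)}(x₁,x₂,x₃|t₁,…,t_n) be the symmetrization over (t₁,…,t_n) of the basic monomial p(x₁,x₂,x₃|t₁,…,t_n) = ∏_{q=1}^N ∏_{i<j∈s_q}(t_i−t_j)² · ∏_{j∈χ₁}(t_j−x₂)(t_j−x₃) · ∏_{j∈χ₂}(t_j−x₁)(t_j−x₃) · ∏_{j∈χ₃}(t_j−x₁)(t_j−x₂). Then P(x₁,x₂,x₃ | x,…,x (N+1 copies), t₁,…,t_{n−N−1}) = 0 identically. -/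
/-!
Every summand of the symmetrization vanishes by pigeonhole: after permuting, the `N + 1`
coinciding variables still sit in only `N` groups, so two of them share a group and the
factor `(t_i - t_j)²` of that group is zero.
-/

open Finset

/-- The basic monomial `p(x₁,x₂,x₃|t₁,…,t_n)` of the parafermionic polynomial.
The `n` variables are divided into `N` groups by `grp`; the group of index `q`
belongs to the set `χ_{chi q + 1}` (value `3` meaning the set `χ₄`). -/
def basicMonomial (n N : ℕ) (grp : Fin n → Fin N) (chi : Fin N → Fin 4)
    (x : Fin 3 → ℝ) (t : Fin n → ℝ) : ℝ :=
  (∏ i : Fin n, ∏ j : Fin n, if i < j ∧ grp i = grp j then (t i - t j) ^ 2 else 1) *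
  ∏ j : Fin n,
    (if chi (grp j) = 0 then (t j - x 1) * (t j - x 2)
     else if chi (grp j) = 1 then (t j - x 0) * (t j - x 2)
     else if chi (grp j) = 2 then (t j - x 0) * (t j - x 1)
     else 1)

/-- The symmetrization of the basic monomial over the variables `t₁,…,t_n`. -/
def symMonomial (n N : ℕ) (grp : Fin n → Fin N) (chi : Fin N → Fin 4)
    (x : Fin 3 → ℝ) (t : Fin n → ℝ) : ℝ :=
  ∑ σ : Equiv.Perm (Fin n), basicMonomial n N grp chi x (t ∘ σ)

/-- The configuration data of the parafermionic polynomial `𝐏_m^{(N|k₁,k₂,k₃)}`: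
the groups in `χ₄` (i.e. `chi q = 3`) have `m` elements, the others `m−1` elements;
`χ₁, χ₂, χ₃` contain `k−k₁`, `k−k₂`, `k−k₃` groups and `χ₄` contains `N−k` groups. -/
def validConfig (n N m k k1 k2 k3 : ℕ) (grp : Fin n → Fin N) (chi : Fin N → Fin 4) : Prop :=
  (∀ q : Fin N,
      (chi q = 3 → (Finset.univ.filter fun i => grp i = q).card = m) ∧
      (chi q ≠ 3 → (Finset.univ.filter fun i => grp i = q).card = m - 1)) ∧
  (Finset.univ.filter fun q => chi q = 0).card = k - k1 ∧
  (Finset.univ.filter fun q => chi q = 1).card = k - k2 ∧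
  (Finset.univ.filter fun q => chi q = 2).card = k - k3 ∧
  (Finset.univ.filter fun q => chi q = 3).card = N - k

section

variable {n N : ℕ} {grp : Fin n → Fin N} {chi : Fin N → Fin 4} {x : Fin 3 → ℝ} {t : Fin n → ℝ}

theorem basicMonomial_eq_zero_of_grp_eq {i j : Fin n} (hij : i ≠ j) (hgrp : grp i = grp j)
    (ht : t i = t j) : basicMonomial n N grp chi x t = 0 := by
  wlog hlt : i < j generalizing i j
  · exact this hij.symm hgrp.symm ht.symm (hij.lt_or_gt.resolve_left hlt)
  apply mul_eq_zero_of_left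
  apply prod_eq_zero (mem_univ i)
  apply prod_eq_zero (mem_univ j)
  rw [if_pos ⟨hlt, hgrp⟩, ht, sub_self, zero_pow two_ne_zero]

theorem basicMonomial_eq_zero_of_const_on {s : Finset (Fin n)} (hs : N < #s) {c : ℝ}
    (ht : ∀ i ∈ s, t i = c) : basicMonomial n N grp chi x t = 0 := by
  have hN : #(univ : Finset (Fin N)) < #s := by rwa [card_univ, Fintype.card_fin]
  obtain ⟨i, hi, j, hj, hij, hgrp⟩ :=
    exists_ne_map_eq_of_card_lt_of_maps_to hN fun a _ => mem_univ (grp a)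
  exact basicMonomial_eq_zero_of_grp_eq hij hgrp ((ht i hi).trans (ht j hj).symm)

theorem symMonomial_eq_zero_of_const_on {s : Finset (Fin n)} (hs : N < #s) {c : ℝ}
    (ht : ∀ i ∈ s, t i = c) : symMonomial n N grp chi x t = 0 := by
  refine sum_eq_zero fun σ _ => ?_
  refine basicMonomial_eq_zero_of_const_on (s := s.map σ.symm.toEmbedding) (c := c)
    (by rwa [card_map]) fun i hi => ?_
  obtain ⟨a, ha, rfl⟩ := mem_map.mp hi
  simpa using ht a ha

end

theorem symMonomial_cluster_vanishing_general (N m k : ℕ) (hn1 : N + 1 ≤ m * N - k)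
    (grp : Fin (m * N - k) → Fin N) (chi : Fin N → Fin 4)
    (x : Fin 3 → ℝ) (t : Fin (m * N - k) → ℝ) (c : ℝ)
    (ht : ∀ i : Fin (m * N - k), (i : ℕ) < N + 1 → t i = c) :
    symMonomial (m * N - k) N grp chi x t = 0 := by
  refine symMonomial_eq_zero_of_const_on (s := univ.map (Fin.castLEEmb hn1))
    (by simp) fun i hi => ht i ?_
  obtain ⟨a, -, rfl⟩ := mem_map.mp hi
  exact a.isLt

/-- Clustering property: the symmetrized parafermionic polynomial
`𝐏_m^{(N|k₁,k₂,k₃)}(x₁,x₂,x₃|t)` vanishes when `N+1` of the `t`-variables coincide. -/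
theorem symMonomial_cluster_vanishing (N m k k1 k2 k3 : ℕ) (hN : 1 ≤ N) (hm : 1 ≤ m)
    (hk : k ≤ N) (hk1 : k1 ≤ k) (hk2 : k2 ≤ k) (hk3 : k3 ≤ k)
    (hsum : k1 + k2 + k3 = 2 * k) (hn1 : N + 1 ≤ m * N - k)
    (grp : Fin (m * N - k) → Fin N) (chi : Fin N → Fin 4)
    (hcfg : validConfig (m * N - k) N m k k1 k2 k3 grp chi)
    (x : Fin 3 → ℝ) (t : Fin (m * N - k) → ℝ) (c : ℝ)
    (ht : ∀ i : Fin (m * N - k), (i : ℕ) < N + 1 → t i = c) :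
    symMonomial (m * N - k) N grp chi x t = 0 :=
  symMonomial_cluster_vanishing_general N m k hn1 grp chi x t c ht
end

section
/- Fix integers N ≥ 1 and m ≥ 2, let n = mN, and let P(t₁,…,t_n) be the symmetrization of the monomial ∏_{q=1}^N ∏_{i<j∈s_q}(t_i−t_j)², where s₁,…,s_N is a partition of the n variables into N groups of size m. For a nonnegative integer g, expand D(t₁,…,t_n) = ∏_{i<j}(t_i−t_j)^{2g} · P(t₁,…,t_n) = Σ c_{ν₁,…,ν_n} t₁^{ν₁}⋯t_n^{ν_n}. Then for any monomial with c_{ν₁,…,ν_n} ≠ 0 and exponents ordered ν₁ ≤ ν₂ ≤ … ≤ ν_n, writing each index as pN+j with 0 ≤ p ≤ m−1 and 1 ≤ j ≤ N, one has p + (pN+j−1)g ≤ ν_{pN+j} ≤ (m+p−1) + ((m+p)N+j−2)g. -/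
open MvPolynomial

/-- `D(t₁,…,t_n) = ∏_{i<j}(t_i−t_j)^{2g} · P(t₁,…,t_n)` as a polynomial, where `P` is the
symmetrization of `∏_q ∏_{i<j∈s_q}(t_i−t_j)²` over a grouping `grp` of the `n` variables
into `N` groups. -/
noncomputable def Dpoly (n N g : ℕ) (grp : Fin n → Fin N) : MvPolynomial (Fin n) ℝ :=
  (∏ i : Fin n, ∏ j : Fin n, if i < j then (X i - X j) ^ (2 * g) else 1) *
    ∑ σ : Equiv.Perm (Fin n), ∏ i : Fin n, ∏ j : Fin n,
      if i < j ∧ grp i = grp j then (X (σ i) - X (σ j)) ^ 2 else 1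

/-!
Both `D` and each symmetrized term are products of factors `(t_a - t_b)^e`, so every monomial
of `D` has, in any set `S` of variables, degree at least `e` times the number of factors with
both ends in `S`. For `D` this is `2g·C(|S|,2)` plus twice the number of same-group pairs
landing in `S`, and by Cauchy–Schwarz the latter term is at least `|S|²/N - |S|`. Taking for `S` the `i+1`
variables with the smallest exponents, whose total is at most `(i+1)·ν_i`, gives the lower
bound. Since `D` is homogeneous, the same estimate for the `i` smallest exponents bounds the
sum of the remaining `n-i` exponents, each at least `ν_i`, from above: the upper bound.
-/

open Finset

theorem Nat.two_mul_choose_two_add_self (c : ℕ) : 2 * c.choose 2 + c = c ^ 2 := by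
  induction c with
  | zero => rfl
  | succ c ih => rw [Nat.choose_succ_succ, Nat.choose_one_right]; linarith

namespace Finset

variable {α β : Type*} [LinearOrder α] [Fintype β] [DecidableEq β]

theorem card_product_filter_lt_and_eq (T : Finset α) (f : α → β) :
    #{x ∈ T ×ˢ T | x.1 < x.2 ∧ f x.1 = f x.2} = ∑ q, (#{a ∈ T | f a = q}).choose 2 := by
  rw [card_eq_sum_card_fiberwise (f := fun x => f x.1) (t := univ) fun _ _ => mem_univ _]
  refine sum_congr rfl fun q _ => ?_
  rw [← card_product_filter_lt, filter_filter]
  congr 1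
  ext ⟨a, b⟩
  simp only [mem_filter, mem_product]
  grind

theorem sq_card_le_card_mul_card_product_filter_lt_and_eq (T : Finset α) (f : α → β) :
    #T ^ 2 ≤ Fintype.card β * (2 * #{x ∈ T ×ˢ T | x.1 < x.2 ∧ f x.1 = f x.2} + #T) := by
  have hT : #T = ∑ q, #{a ∈ T | f a = q} :=
    card_eq_sum_card_fiberwise fun _ _ => mem_univ _
  calc #T ^ 2 = (∑ q, #{a ∈ T | f a = q}) ^ 2 := by rw [← hT]
    _ ≤ Fintype.card β * ∑ q, #{a ∈ T | f a = q} ^ 2 := sq_sum_le_card_mul_sum_sq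
    _ = _ := by
      simp only [← Nat.two_mul_choose_two_add_self, sum_add_distrib, ← mul_sum,
        card_product_filter_lt_and_eq, ← hT]

end Finset

namespace MvPolynomial

variable {R σ ι : Type*}

def DegreeOnAtLeast [CommSemiring R] (S : Finset σ) (k : ℕ) (p : MvPolynomial σ R) : Prop :=
  ∀ d ∈ p.support, k ≤ ∑ j ∈ S, d j

theorem degreeOnAtLeast_zero [CommSemiring R] (S : Finset σ) (p : MvPolynomial σ R) :
    DegreeOnAtLeast S 0 p :=
  fun _ _ => Nat.zero_le _

namespace DegreeOnAtLeast

variable {S : Finset σ}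

section CommSemiring

variable [CommSemiring R]

theorem mul {k l : ℕ} {p q : MvPolynomial σ R} (hp : DegreeOnAtLeast S k p)
    (hq : DegreeOnAtLeast S l q) : DegreeOnAtLeast S (k + l) (p * q) := by
  classical
  intro d hd
  obtain ⟨a, ha, b, hb, rfl⟩ := Finset.mem_add.mp (support_mul p q hd)
  simpa only [Finsupp.coe_add, Pi.add_apply, sum_add_distrib] using
    add_le_add (hp a ha) (hq b hb)

theorem prod (s : Finset ι) (k : ι → ℕ) (f : ι → MvPolynomial σ R)
    (h : ∀ x ∈ s, DegreeOnAtLeast S (k x) (f x)) :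
    DegreeOnAtLeast S (∑ x ∈ s, k x) (∏ x ∈ s, f x) := by
  classical
  induction s using Finset.induction_on with
  | empty => simpa using degreeOnAtLeast_zero S (1 : MvPolynomial σ R)
  | insert a s ha ih =>
    rw [prod_insert ha, sum_insert ha]
    exact (h a (mem_insert_self a s)).mul (ih fun x hx => h x (mem_insert_of_mem hx))

theorem pow {k : ℕ} {p : MvPolynomial σ R} (hp : DegreeOnAtLeast S k p) (e : ℕ) :
    DegreeOnAtLeast S (e * k) (p ^ e) := by
  simpa using prod (range e) (fun _ => k) (fun _ => p) fun _ _ => hp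

end CommSemiring

variable [CommRing R] [DecidableEq σ]

theorem X_sub_X {a b : σ} (ha : a ∈ S) (hb : b ∈ S) :
    DegreeOnAtLeast S 1 (X a - X b : MvPolynomial σ R) := by
  intro d hd
  rcases mem_union.mp (support_sub σ _ _ hd) with hd | hd <;>
    obtain rfl := Finset.mem_singleton.mp (support_monomial_subset hd) <;>
      simp [Finsupp.single_apply, ha, hb]

theorem prod_X_sub_X_pow (E : Finset ι) (u v : ι → σ) (e : ℕ) :
    DegreeOnAtLeast S (e * #{x ∈ E | u x ∈ S ∧ v x ∈ S})
      (∏ x ∈ E, (X (u x) - X (v x) : MvPolynomial σ R) ^ e) := by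
  rw [card_filter, mul_sum]
  refine prod E _ _ fun x _ => ?_
  split_ifs with h
  · exact (X_sub_X h.1 h.2).pow e
  · exact degreeOnAtLeast_zero S _

end DegreeOnAtLeast

theorem isHomogeneous_prod_X_sub_X_pow [CommRing R] (E : Finset ι) (u v : ι → σ) (e : ℕ) :
    (∏ x ∈ E, (X (u x) - X (v x) : MvPolynomial σ R) ^ e).IsHomogeneous (e * #E) := by
  simpa [mul_comm] using IsHomogeneous.prod E _ (fun _ => e) fun x _ => by
    simpa using ((isHomogeneous_X R (u x)).sub (isHomogeneous_X R (v x))).pow e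

end MvPolynomial

theorem Dpoly_eq_prod_filter (n N g : ℕ) (grp : Fin n → Fin N) : Dpoly n N g grp =
    (∏ x ∈ {x : Fin n × Fin n | x.1 < x.2}, (X x.1 - X x.2) ^ (2 * g)) *
      ∑ σ : Equiv.Perm (Fin n), ∏ x ∈ {x : Fin n × Fin n | x.1 < x.2 ∧ grp x.1 = grp x.2},
        (X (σ x.1) - X (σ x.2)) ^ 2 := by
  simp only [Dpoly, prod_filter, Fintype.prod_prod_type]

theorem Dpoly_isHomogeneous (n N g : ℕ) (grp : Fin n → Fin N) :
    (Dpoly n N g grp).IsHomogeneous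
      (2 * g * n.choose 2 + 2 * ∑ q, (#{i | grp i = q}).choose 2) := by
  have hV := card_product_filter_lt (s := (univ : Finset (Fin n)))
  have hG := card_product_filter_lt_and_eq (univ : Finset (Fin n)) grp
  rw [univ_product_univ, card_univ, Fintype.card_fin] at hV
  rw [univ_product_univ] at hG
  rw [Dpoly_eq_prod_filter, ← hV, ← hG]
  exact (isHomogeneous_prod_X_sub_X_pow _ _ _ _).mul
    (IsHomogeneous.sum _ _ _ fun σ _ => isHomogeneous_prod_X_sub_X_pow _ _ _ _)

section Dpoly

variable {n N g : ℕ} {grp : Fin n → Fin N}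

theorem Dpoly_degreeOn_ge {d : Fin n →₀ ℕ} (hd : d ∈ (Dpoly n N g grp).support)
    (S : Finset (Fin n)) :
    #S ^ 2 + N * (2 * g * (#S).choose 2) ≤ N * (∑ j ∈ S, d j + #S) := by
  rw [Dpoly_eq_prod_filter] at hd
  obtain ⟨a, ha, b, hb, rfl⟩ := mem_add.mp (support_mul _ _ hd)
  obtain ⟨σ, -, hb⟩ := mem_biUnion.mp (support_sum hb)
  have hV := DegreeOnAtLeast.prod_X_sub_X_pow (R := ℝ) (S := S)
    {x : Fin n × Fin n | x.1 < x.2} Prod.fst Prod.snd (2 * g) a ha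
  have hG := DegreeOnAtLeast.prod_X_sub_X_pow (R := ℝ) (S := S)
    {x : Fin n × Fin n | x.1 < x.2 ∧ grp x.1 = grp x.2} (fun x => σ x.1) (fun x => σ x.2) 2 b hb
  set T := S.map σ.symm.toEmbedding
  have hCS := sq_card_le_card_mul_card_product_filter_lt_and_eq T grp
  rw [card_map, Fintype.card_fin] at hCS
  have hcountV :
      #{x ∈ {x : Fin n × Fin n | x.1 < x.2} | x.1 ∈ S ∧ x.2 ∈ S} = (#S).choose 2 := by
    rw [← card_product_filter_lt]; congr 1; ext
    simp only [mem_filter, mem_univ, true_and, mem_product]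
    tauto
  have hcountG :
      #{x ∈ {x : Fin n × Fin n | x.1 < x.2 ∧ grp x.1 = grp x.2} | σ x.1 ∈ S ∧ σ x.2 ∈ S} =
        #{x ∈ T ×ˢ T | x.1 < x.2 ∧ grp x.1 = grp x.2} := by
    congr 1; ext
    simp only [mem_filter, mem_univ, true_and, mem_product, mem_map_equiv, Equiv.symm_symm, T]
    tauto
  rw [hcountV] at hV
  rw [hcountG] at hG
  calc #S ^ 2 + N * (2 * g * (#S).choose 2)
      ≤ N * (2 * #{x ∈ T ×ˢ T | x.1 < x.2 ∧ grp x.1 = grp x.2} + #S) + N * ∑ j ∈ S, a j :=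
        add_le_add hCS (Nat.mul_le_mul_left N hV)
    _ ≤ N * (∑ j ∈ S, b j + #S) + N * ∑ j ∈ S, a j := by gcongr
    _ = N * (∑ j ∈ S, (a + b) j + #S) := by
      simp only [Finsupp.coe_add, Pi.add_apply, sum_add_distrib]; ring

theorem Dpoly_exponent_lower_bound {d : Fin n →₀ ℕ} (hd : d ∈ (Dpoly n N g grp).support)
    (hmono : Monotone d) (i : Fin n) : i / N + i * g ≤ d i := by
  have h := Dpoly_degreeOn_ge hd (Iic i)
  rw [Fin.card_Iic] at h
  have hsum : ∑ j ∈ Iic i, d j ≤ (i + 1) * d i := by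
    simpa using sum_le_card_nsmul (Iic i) d (d i) fun j hj => hmono (mem_Iic.mp hj)
  have hch : 2 * ((i : ℕ) + 1).choose 2 = (i + 1) * i := by
    linarith [Nat.two_mul_choose_two_add_self (i + 1)]
  have key : (i + 1) * (i + 1 + N * g * i) ≤ (i + 1) * (N * d i + N) :=
    calc (i + 1) * (i + 1 + N * g * i)
        = (i + 1) ^ 2 + N * (2 * g * ((i : ℕ) + 1).choose 2) := by
          rw [mul_assoc 2, mul_left_comm 2, hch]; ring
      _ ≤ N * (∑ j ∈ Iic i, d j + (i + 1)) := h
      _ ≤ N * ((i + 1) * d i + (i + 1)) := by gcongr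
      _ = (i + 1) * (N * d i + N) := by ring
  have hlin : i + 1 + N * g * i ≤ N * d i + N := Nat.le_of_mul_le_mul_left key (Nat.succ_pos i)
  have hdiv : N * (i / N) ≤ i := Nat.mul_div_le i N
  by_contra! hlt
  nlinarith

theorem Dpoly_degreeOn_compl_le {d : Fin n →₀ ℕ} (hd : d ∈ (Dpoly n N g grp).support)
    (S : Finset (Fin n)) :
    N * ∑ j ∈ Sᶜ, d j + #S ^ 2 + N * (2 * g * (#S).choose 2) ≤
      N * (2 * g * n.choose 2 + 2 * ∑ q, (#{i | grp i = q}).choose 2 + #S) := by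
  have htot : ∑ j ∈ S, d j + ∑ j ∈ Sᶜ, d j =
      2 * g * n.choose 2 + 2 * ∑ q, (#{i | grp i = q}).choose 2 := by
    rw [sum_add_sum_compl]
    simpa [Finsupp.weight_apply, Finsupp.sum_fintype] using
      Dpoly_isHomogeneous n N g grp (mem_support_iff.mp hd)
  linarith [Dpoly_degreeOn_ge hd S, congrArg (N * ·) htot]

end Dpoly

theorem Dpoly_exponent_upper_bound {m N g : ℕ} {grp : Fin (m * N) → Fin N}
    (hsz : ∀ q, #{i | grp i = q} = m) {d : Fin (m * N) →₀ ℕ}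
    (hd : d ∈ (Dpoly (m * N) N g grp).support) (hmono : Monotone d) (i : Fin (m * N)) :
    d i ≤ m - 1 + i / N + (m * N + i - 1) * g := by
  have h := Dpoly_degreeOn_compl_le hd (Iio i)
  have hcompl : (Iio i)ᶜ = Ici i := by ext; simp
  simp only [hcompl, Fin.card_Iio, hsz, sum_const, card_univ, Fintype.card_fin,
    smul_eq_mul] at h
  have hS : (m * N - i) * d i ≤ ∑ j ∈ Ici i, d j := by
    simpa using card_nsmul_le_sum (Ici i) d (d i) fun j hj => hmono (mem_Ici.mp hj)
  have hN : 0 < N := Nat.pos_of_ne_zero fun h => by subst h; exact i.elim0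
  have hp : i / N < m := Nat.div_lt_of_lt_mul (i.2.trans_eq (mul_comm m N))
  have hI := Nat.div_add_mod (i : ℕ) N
  have hr := Nat.mod_lt (i : ℕ) hN
  have h2n := Nat.two_mul_choose_two_add_self (m * N)
  have h2i := Nat.two_mul_choose_two_add_self i
  have h2m := Nat.two_mul_choose_two_add_self m
  have hlt : i < m * N := i.2
  generalize (i : ℕ) / N = p at *
  generalize (i : ℕ) % N = r at *
  generalize (i : ℕ) = I at *
  generalize ∑ j ∈ Ici i, d j = DS at *
  generalize d i = v at *
  subst hI
  by_contra! hv
  -- with `i = N p + r`, everything cancels down to `(N - r) (N (m - p) - r) > 0`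
  zify [show 1 ≤ m by omega, show N * p + r ≤ m * N by omega,
    show 1 ≤ m * N + (N * p + r) by omega] at *
  have hA := mul_le_mul_of_nonneg_left hv (by positivity : (0 : ℤ) ≤ N * (m * N - (N * p + r)))
  have hB := mul_le_mul_of_nonneg_left hS (by positivity : (0 : ℤ) ≤ N)
  have hprod : (0 : ℤ) < (N - r) * (N * (m - p) - r) := by
    apply mul_pos <;> nlinarith
  linarith [congrArg ((N * g : ℤ) * ·) h2n, congrArg ((N * N : ℤ) * ·) h2m,
    congrArg ((N * g : ℤ) * ·) h2i]

/-- The 0-based index `i` is the paper's `pN+j−1`, so that `p = i / N`. -/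
theorem Dpoly_exponent_bounds_general (N m g : ℕ)
    (grp : Fin (m * N) → Fin N)
    (hsz : ∀ q : Fin N, (Finset.univ.filter fun i => grp i = q).card = m)
    (ν : Fin (m * N) → ℕ) (hmono : Monotone ν)
    (hc : MvPolynomial.coeff (Finsupp.equivFunOnFinite.symm ν) (Dpoly (m * N) N g grp) ≠ 0)
    (i : Fin (m * N)) :
    (i : ℕ) / N + (i : ℕ) * g ≤ ν i ∧
      ν i ≤ (m - 1 + (i : ℕ) / N) + (m * N + (i : ℕ) - 1) * g := by
  have hd := mem_support_iff.mpr hc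
  have hmono' : Monotone (Finsupp.equivFunOnFinite.symm ν) := by
    rwa [Finsupp.coe_equivFunOnFinite_symm]
  simpa using
    ⟨Dpoly_exponent_lower_bound hd hmono' i, Dpoly_exponent_upper_bound hsz hd hmono' i⟩

/-- Exponent inequalities for the monomials of `D` (case `k₁=k₂=k₃=0`): if the
coefficient of `t₁^{ν₁}⋯t_n^{ν_n}` is nonzero and `ν₁ ≤ … ≤ ν_n`, then for the index
written as `pN+j` (1-based, i.e. the 0-based index `i` has `p = i/N`, `pN+j−1 = i`),
`p + (pN+j−1)g ≤ ν_{pN+j} ≤ (m+p−1) + ((m+p)N+j−2)g`. -/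
theorem Dpoly_exponent_bounds (N m g : ℕ) (hN : 1 ≤ N) (hm : 2 ≤ m)
    (grp : Fin (m * N) → Fin N)
    (hsz : ∀ q : Fin N, (Finset.univ.filter fun i => grp i = q).card = m)
    (ν : Fin (m * N) → ℕ) (hmono : Monotone ν)
    (hc : MvPolynomial.coeff (Finsupp.equivFunOnFinite.symm ν) (Dpoly (m * N) N g grp) ≠ 0)
    (i : Fin (m * N)) :
    (i : ℕ) / N + (i : ℕ) * g ≤ ν i ∧
      ν i ≤ (m - 1 + (i : ℕ) / N) + (m * N + (i : ℕ) - 1) * g :=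
  Dpoly_exponent_bounds_general N m g grp hsz ν hmono hc i
end
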